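/- Let G be a connected weighted graph, (A, V\A) an unweighted cut of neighbourhood diversity at most k, and H_B the gadget graph built from G \ A by adding vertices a_{ij}. Then for every B' ⊆ V \ A: (i) if B' is a k-module of G then B' is a k-module of H_B; and (ii) if A ∪ B' is a k-module of G, then B' ∪ { a_{ij} : 1 ≤ i,j ≤ k' } is a k-module of H_B. -/

import Mathlib

open scoped Classical

variable {V : Type*}

/-- `M` is a `k`-module of the graph `H`: it can be partitioned into (at most) `k` parts
such that within each part all vertices have identical neighbourhoods outside `M`. -/
def IsKModule {α : Type*} (H : SimpleGraph α) (k : ℕ) (M : Set α) : Prop :=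
  ∃ P : Fin k → Set α, (⋃ i, P i) = M ∧
    (∀ i j, i ≠ j → Disjoint (P i) (P j)) ∧
    ∀ i, ∀ u ∈ P i, ∀ v ∈ P i, ∀ x ∉ M, (H.Adj u x ↔ H.Adj v x)

/-- The underlying relation of the gadget graph `H_B` (Definition 4.2): on `G \ A`
(the vertices of `A` are kept as isolated junk vertices) we add fresh vertices
`a_{ij} = inr (i,j)` for the parts `A_i` with `B_i ≠ ∅`; each `a_{ij}` is joined to all
of `B_i`, and `a_{ij}` is joined to `a_{ji}` for `i ≠ j`. -/
def gadgetRelB {k : ℕ} (G : SimpleGraph V) (A : Set V) (B : Fin k → Set V) :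
    (V ⊕ Fin k × Fin k) → (V ⊕ Fin k × Fin k) → Prop
  | Sum.inl u, Sum.inl v => u ∉ A ∧ v ∉ A ∧ G.Adj u v
  | Sum.inl u, Sum.inr (i, _) => u ∈ B i
  | Sum.inr (i, j), Sum.inr (i', j') =>
      i' = j ∧ j' = i ∧ i ≠ j ∧ (B i).Nonempty ∧ (B j).Nonempty
  | _, _ => False

/-- The gadget graph `H_B` of Definition 4.2. -/
def gadgetB {k : ℕ} (G : SimpleGraph V) (A : Set V) (B : Fin k → Set V) :
    SimpleGraph (V ⊕ Fin k × Fin k) :=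
  SimpleGraph.fromRel (gadgetRelB G A B)


/-!
Each vertex `y` of the new set has a representative `a` in the old `k`-module whose
neighbourhood outside the module it copies: `inl u` copies `u`, and `a_{ij}` copies any vertex
of `A_i`, all of which are twins outside `A`. Pulling the old partition back along such
representatives gives the new one. For (i), `a_{ij}` sees `inl u` iff some vertex of `A_i`
sees `u`, and `A_i` lies outside `B'`; for (ii), the `a_{ij}` left outside the set are isolated.
-/

theorem IsKModule.of_exists_rep {α β : Type*} {G : SimpleGraph α} {H : SimpleGraph β} {k : ℕ}
    {M : Set α} {N : Set β} (hM : IsKModule G k M) (R : β → α → Prop)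
    (hR : ∀ y ∈ N, ∃ a ∈ M, R y a)
    (htwin : ∀ y ∈ N, ∀ y' ∈ N, ∀ a a', R y a → R y' a' →
      (∀ z ∉ M, G.Adj a z ↔ G.Adj a' z) → ∀ x ∉ N, (H.Adj y x ↔ H.Adj y' x)) :
    IsKModule H k N := by
  obtain ⟨P, hcover, hdisj, htw⟩ := hM
  choose r hrM hrR using hR
  refine ⟨fun s => {y | ∃ h : y ∈ N, r y h ∈ P s}, ?_, ?_, ?_⟩
  · ext y
    simp only [Set.mem_iUnion, Set.mem_ofPred_eq]
    refine ⟨fun ⟨_, h, _⟩ => h, fun h => ?_⟩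
    obtain ⟨s, hs⟩ := Set.mem_iUnion.mp (hcover ▸ hrM y h)
    exact ⟨s, h, hs⟩
  · intro s s' hss'
    exact Set.disjoint_left.mpr fun y ⟨h, hs⟩ ⟨_, hs'⟩ =>
      Set.disjoint_left.mp (hdisj s s' hss') hs hs'
  · rintro s y ⟨hy, hys⟩ y' ⟨hy', hys'⟩
    exact htwin y hy y' hy' _ _ (hrR y hy) (hrR y' hy') (htw s _ hys _ hys')

section Gadget

variable {k : ℕ} (G : SimpleGraph V) (A : Set V) (B : Fin k → Set V)

theorem gadgetB_adj_inl_inl (u w : V) :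
    (gadgetB G A B).Adj (Sum.inl u) (Sum.inl w) ↔ u ∉ A ∧ w ∉ A ∧ G.Adj u w := by
  simp only [gadgetB, SimpleGraph.fromRel_adj, gadgetRelB, ne_eq, Sum.inl.injEq]
  exact ⟨fun ⟨_, h⟩ => h.elim id fun ⟨hw, hu, h⟩ => ⟨hu, hw, h.symm⟩,
    fun h => ⟨h.2.2.ne, Or.inl h⟩⟩

theorem gadgetB_adj_inl_inr (u : V) (i j : Fin k) :
    (gadgetB G A B).Adj (Sum.inl u) (Sum.inr (i, j)) ↔ u ∈ B i := by
  simp [gadgetB, gadgetRelB]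

theorem gadgetB_not_adj_inr {i : Fin k} (hi : ¬ (B i).Nonempty) (x : V ⊕ Fin k × Fin k)
    (j : Fin k) : ¬ (gadgetB G A B).Adj x (Sum.inr (i, j)) := by
  rcases x with u | ⟨i', j'⟩
  · exact fun h => hi ⟨u, (gadgetB_adj_inl_inr G A B u i j).mp h⟩
  · simp only [gadgetB, SimpleGraph.fromRel_adj, gadgetRelB]
    rintro ⟨-, ⟨rfl, -, -, -, h⟩ | ⟨-, -, -, h, -⟩⟩ <;> exact hi h

variable {G A B} {Apart : Fin k → Set V}

theorem gadgetB_adj_inr_inl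
    (hmod : ∀ i, ∀ u ∈ Apart i, ∀ v ∈ Apart i, ∀ x ∉ A, (G.Adj u x ↔ G.Adj v x))
    (hB : ∀ i, B i = {x | x ∉ A ∧ ∃ a ∈ Apart i, G.Adj a x})
    {i : Fin k} {a : V} (ha : a ∈ Apart i) (j : Fin k) (w : V) :
    (gadgetB G A B).Adj (Sum.inr (i, j)) (Sum.inl w) ↔ w ∉ A ∧ G.Adj a w := by
  rw [SimpleGraph.adj_comm, gadgetB_adj_inl_inr, hB, Set.mem_ofPred_eq]
  exact and_congr_right fun hw =>
    ⟨fun ⟨b, hb, hbw⟩ => (hmod i b hb a ha w hw).mp hbw, fun h => ⟨a, ha, h⟩⟩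

theorem isKModule_gadgetB_image_inl
    (hB : ∀ i, B i = {x | x ∉ A ∧ ∃ a ∈ Apart i, G.Adj a x})
    (hApart : ∀ i, Apart i ⊆ A) {B' : Set V} (hB' : B' ⊆ Aᶜ)
    (h : IsKModule G k B') : IsKModule (gadgetB G A B) k (Sum.inl '' B') := by
  refine h.of_exists_rep (fun y a => y = Sum.inl a) (fun _ ⟨u, hu, hy⟩ => ⟨u, hu, hy.symm⟩) ?_
  rintro _ hu _ hv u v rfl rfl htw x hx
  have huA : u ∉ A := hB' (Sum.inl_injective.mem_set_image.mp hu)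
  have hvA : v ∉ A := hB' (Sum.inl_injective.mem_set_image.mp hv)
  rcases x with w | ⟨i, j⟩
  · have hw : w ∉ B' := fun hw => hx ⟨w, hw, rfl⟩
    rw [gadgetB_adj_inl_inl, gadgetB_adj_inl_inl, and_iff_right huA, and_iff_right hvA]
    exact and_congr_right fun _ => htw w hw
  · rw [gadgetB_adj_inl_inr, gadgetB_adj_inl_inr, hB, Set.mem_ofPred_eq, Set.mem_ofPred_eq,
      and_iff_right huA, and_iff_right hvA]
    refine exists_congr fun a => and_congr_right fun ha => ?_
    rw [G.adj_comm, htw a fun haB' => hB' haB' (hApart i ha), G.adj_comm]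

theorem isKModule_gadgetB_image_inl_union
    (hB : ∀ i, B i = {x | x ∉ A ∧ ∃ a ∈ Apart i, G.Adj a x})
    (hmod : ∀ i, ∀ u ∈ Apart i, ∀ v ∈ Apart i, ∀ x ∉ A, (G.Adj u x ↔ G.Adj v x))
    (hApart : ∀ i, Apart i ⊆ A) {B' : Set V} (hB' : B' ⊆ Aᶜ) (h : IsKModule G k (A ∪ B')) :
    IsKModule (gadgetB G A B) k
      (Sum.inl '' B' ∪ {x | ∃ i j : Fin k, x = Sum.inr (i, j) ∧ (B i).Nonempty}) := by
  refine h.of_exists_rep (fun y a => ∀ w, (gadgetB G A B).Adj y (Sum.inl w) ↔ w ∉ A ∧ G.Adj a w)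
    ?_ ?_
  · rintro _ (⟨u, hu, rfl⟩ | ⟨i, j, rfl, x, hx⟩)
    · refine ⟨u, Or.inr hu, fun w => ?_⟩
      rw [gadgetB_adj_inl_inl, and_iff_right (show u ∉ A from hB' hu)]
    · rw [hB] at hx
      obtain ⟨-, a, ha, -⟩ := hx
      exact ⟨a, Or.inl (hApart i ha), gadgetB_adj_inr_inl hmod hB ha j⟩
  · intro y _ y' _ a a' hya hya' htw x hx
    rcases x with w | ⟨i, j⟩
    · have hw : w ∉ B' := fun hw => hx (Or.inl ⟨w, hw, rfl⟩)
      rw [hya, hya']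
      exact and_congr_right fun hwA => htw w fun hw' => hw'.elim hwA hw
    · have hi : ¬ (B i).Nonempty := fun hi => hx (Or.inr ⟨i, j, rfl, hi⟩)
      exact iff_of_false (gadgetB_not_adj_inr G A B hi y j) (gadgetB_not_adj_inr G A B hi y' j)

end Gadget

theorem gadgetB_preserves_kmodules_general (G : SimpleGraph V)
    (A : Set V) (k : ℕ) (Apart : Fin k → Set V)
    (hcover : (⋃ i, Apart i) = A)
    (hmod : ∀ i, ∀ u ∈ Apart i, ∀ v ∈ Apart i, ∀ x ∉ A, (G.Adj u x ↔ G.Adj v x))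
    (B : Fin k → Set V) (hB : ∀ i, B i = {x | x ∉ A ∧ ∃ a ∈ Apart i, G.Adj a x})
    (B' : Set V) (hB' : B' ⊆ Aᶜ) :
    (IsKModule G k B' → IsKModule (gadgetB G A B) k (Sum.inl '' B')) ∧
      (IsKModule G k (A ∪ B') →
        IsKModule (gadgetB G A B) k
          (Sum.inl '' B' ∪ {x | ∃ i j : Fin k, x = Sum.inr (i, j) ∧ (B i).Nonempty})) := by
  have hApart : ∀ i, Apart i ⊆ A := fun i => hcover ▸ Set.subset_iUnion Apart i
  exact ⟨isKModule_gadgetB_image_inl hB hApart hB',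
    isKModule_gadgetB_image_inl_union hB hmod hApart hB'⟩

/-- **Lemma 4.5 (2).** Let `(A, V \ A)` be an unweighted cut of neighbourhood diversity
at most `k` of a connected graph `G`, with minimal partition `A_1, …, A_k` of `A` and
`B_i = N_G(A_i) \ A`, and let `H_B` be the gadget graph of Definition 4.2.  Then for
every `B' ⊆ V \ A`: (i) if `B'` is a `k`-module of `G` then it is a `k`-module of `H_B`;
and (ii) if `A ∪ B'` is a `k`-module of `G`, then `B' ∪ { a_{ij} : 1 ≤ i,j ≤ k' }` is a
`k`-module of `H_B` (where the `a_{ij}` range over the parts with `B_i ≠ ∅`). -/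
theorem gadgetB_preserves_kmodules [Fintype V] (G : SimpleGraph V) (hG : G.Connected)
    (A : Set V) (k : ℕ) (Apart : Fin k → Set V)
    (hcover : (⋃ i, Apart i) = A)
    (hne : ∀ i, (Apart i).Nonempty)
    (hdisj : ∀ i j, i ≠ j → Disjoint (Apart i) (Apart j))
    (hmod : ∀ i, ∀ u ∈ Apart i, ∀ v ∈ Apart i, ∀ x ∉ A, (G.Adj u x ↔ G.Adj v x))
    (hmin : ∀ i j, i ≠ j →
      ∃ u ∈ Apart i, ∃ v ∈ Apart j, ∃ x ∉ A, ¬ (G.Adj u x ↔ G.Adj v x))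
    (B : Fin k → Set V) (hB : ∀ i, B i = {x | x ∉ A ∧ ∃ a ∈ Apart i, G.Adj a x})
    (B' : Set V) (hB' : B' ⊆ Aᶜ) :
    (IsKModule G k B' → IsKModule (gadgetB G A B) k (Sum.inl '' B')) ∧
      (IsKModule G k (A ∪ B') →
        IsKModule (gadgetB G A B) k
          (Sum.inl '' B' ∪ {x | ∃ i j : Fin k, x = Sum.inr (i, j) ∧ (B i).Nonempty})) :=
  gadgetB_preserves_kmodules_general G A k Apart hcover hmod B hB B' hB'
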